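/- arXiv:1109.2362 — 2 statements merged into one kernel-verified Lean document; each statement's English description precedes it below -/
import Mathlib

section
/- A 4-element set M of even 2-characteristics lies in C₄⁺ if and only if the sum of the four elements of M is 0. -/
open scoped Classical

/-- A 2-characteristic: a pair `m = (m', m'')` with `m', m'' ∈ (ZMod 2)²`. -/
abbrev Char2 : Type := (ZMod 2 × ZMod 2) × (ZMod 2 × ZMod 2)

/-- `m` is even if `m'₁·m''₁ + m'₂·m''₂ = 0` in `ZMod 2`. -/
def IsEvenChar (m : Char2) : Prop := m.1.1 * m.2.1 + m.1.2 * m.2.2 = 0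

/-- `m` is odd if it is not even. -/
def IsOddChar (m : Char2) : Prop := ¬ IsEvenChar m

/-- The finset of all (10) even 2-characteristics. -/
noncomputable def EvenChars : Finset Char2 := Finset.univ.filter IsEvenChar

/-- `C₃⁻`: 3-element sets of even characteristics whose sum is odd. -/
def C3minus (M : Finset Char2) : Prop :=
  M ⊆ EvenChars ∧ M.card = 3 ∧ IsOddChar (∑ m ∈ M, m)

/-- `C₃⁺`: 3-element sets of even characteristics whose sum is even. -/
def C3plus (M : Finset Char2) : Prop :=
  M ⊆ EvenChars ∧ M.card = 3 ∧ IsEvenChar (∑ m ∈ M, m)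

/-- `C₄⁻`: 4-element sets of even characteristics all of whose 3-element subsets lie in `C₃⁻`. -/
def C4minus (M : Finset Char2) : Prop :=
  M ⊆ EvenChars ∧ M.card = 4 ∧ ∀ T ⊆ M, T.card = 3 → C3minus T

/-- `C₄⁺`: 4-element sets of even characteristics all of whose 3-element subsets lie in `C₃⁺`. -/
def C4plus (M : Finset Char2) : Prop :=
  M ⊆ EvenChars ∧ M.card = 4 ∧ ∀ T ⊆ M, T.card = 3 → C3plus T

/-- `C₅⁻`: 5-element sets of even characteristics containing exactly one element of `C₄⁻`. -/
def C5minus (M : Finset Char2) : Prop :=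
  M ⊆ EvenChars ∧ M.card = 5 ∧ ∃! T, T ⊆ M ∧ C4minus T

/-- `C₅⁺`: 5-element sets of even characteristics containing exactly one element of `C₄⁺`. -/
def C5plus (M : Finset Char2) : Prop :=
  M ⊆ EvenChars ∧ M.card = 5 ∧ ∃! T, T ⊆ M ∧ C4plus T

/-- `C₆⁻`: 6-element sets of even characteristics whose complement lies in `C₄⁺`. -/
def C6minus (M : Finset Char2) : Prop :=
  M ⊆ EvenChars ∧ M.card = 6 ∧ C4plus (EvenChars \ M)

/-- `C₆⁺`: 6-element sets of even characteristics whose complement lies in `C₄⁻`. -/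
def C6plus (M : Finset Char2) : Prop :=
  M ⊆ EvenChars ∧ M.card = 6 ∧ C4minus (EvenChars \ M)

instance : DecidablePred IsEvenChar := fun m => by unfold IsEvenChar; infer_instance

private def auxF (a b c d : Char2) : Bool :=
  !(decide (IsEvenChar a) && decide (IsEvenChar b) && decide (IsEvenChar c) && decide (IsEvenChar d)
    && !(decide (a = b)) && !(decide (a = c)) && !(decide (a = d)) && !(decide (b = c))
    && !(decide (b = d)) && !(decide (c = d))
    && decide (IsEvenChar (a+b+c)) && decide (IsEvenChar (a+b+d)) && decide (IsEvenChar (a+c+d)))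
  || decide (a+b+c+d = 0)

set_option maxRecDepth 100000 in
set_option maxHeartbeats 4000000 in
private lemma auxF_true : ∀ a b c d : Char2, auxF a b c d = true := by decide

private lemma key4 (a b c d : Char2) (ha : IsEvenChar a) (hb : IsEvenChar b)
    (hc : IsEvenChar c) (hd : IsEvenChar d)
    (hab : a ≠ b) (hac : a ≠ c) (had : a ≠ d) (hbc : b ≠ c) (hbd : b ≠ d) (hcd : c ≠ d)
    (h1 : IsEvenChar (a+b+c)) (h2 : IsEvenChar (a+b+d)) (h3 : IsEvenChar (a+c+d)) :
    a+b+c+d = 0 := by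
  have := auxF_true a b c d
  unfold auxF at this
  simp only [Bool.or_eq_true, Bool.not_eq_true', Bool.not_eq_false', Bool.and_eq_true,
    decide_eq_true_eq, decide_eq_false_iff_not, Bool.and_eq_false_iff,
    decide_eq_true_iff] at this
  tauto

private lemma self_add (x : Char2) : x + x = 0 := by
  have : ∀ y : Char2, y + y = 0 := by decide
  exact this x

private lemma neg_self (x : Char2) : -x = x := by
  have : ∀ y : Char2, -y = y := by decide
  exact this x

private lemma mem_evenChars {x : Char2} (h : x ∈ EvenChars) : IsEvenChar x := by
  simp only [EvenChars, Finset.mem_filter] at h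
  exact h.2

theorem C4plus_iff_sum_zero (M : Finset Char2) (hM : M ⊆ EvenChars) (hcard : M.card = 4) :
    C4plus M ↔ ∑ m ∈ M, m = 0 := by
  constructor
  · rintro ⟨-, -, h3⟩
    obtain ⟨a, s, has, hMeq, hs3⟩ := Finset.card_eq_succ.mp (by rw [hcard])
    obtain ⟨b, c, d, hbc, hbd, hcd, rfl⟩ := Finset.card_eq_three.mp hs3
    subst hMeq
    have hab : a ≠ b := fun h => has (h ▸ by simp)
    have hac : a ≠ c := fun h => has (h ▸ by simp)
    have had : a ≠ d := fun h => has (h ▸ by simp)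
    have hmem : ∀ x ∈ ({a, b, c, d} : Finset Char2), IsEvenChar x := fun x hx =>
      mem_evenChars (hM hx)
    have hsum : ∀ T : Finset Char2, T ⊆ {a, b, c, d} → T.card = 3 →
        IsEvenChar (∑ m ∈ T, m) := fun T hT hT3 => (h3 T hT hT3).2.2
    have habc : IsEvenChar (a + b + c) := by
      have := hsum {a, b, c} (by intro x; simp; tauto) (by
        rw [Finset.card_eq_three]; exact ⟨a, b, c, hab, hac, hbc, rfl⟩)
      rwa [Finset.sum_insert (by simp [hab, hac]), Finset.sum_insert (by simp [hbc]),
        Finset.sum_singleton, ← add_assoc] at this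
    have habd : IsEvenChar (a + b + d) := by
      have := hsum {a, b, d} (by intro x; simp; tauto) (by
        rw [Finset.card_eq_three]; exact ⟨a, b, d, hab, had, hbd, rfl⟩)
      rwa [Finset.sum_insert (by simp [hab, had]), Finset.sum_insert (by simp [hbd]),
        Finset.sum_singleton, ← add_assoc] at this
    have hacd : IsEvenChar (a + c + d) := by
      have := hsum {a, c, d} (by intro x; simp; tauto) (by
        rw [Finset.card_eq_three]; exact ⟨a, c, d, hac, had, hcd, rfl⟩)
      rwa [Finset.sum_insert (by simp [hac, had]), Finset.sum_insert (by simp [hcd]),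
        Finset.sum_singleton, ← add_assoc] at this
    have := key4 a b c d (hmem a (by simp)) (hmem b (by simp)) (hmem c (by simp))
      (hmem d (by simp)) hab hac had hbc hbd hcd habc habd hacd
    rw [Finset.sum_insert (by simp [hab, hac, had]), Finset.sum_insert (by simp [hbc, hbd]),
      Finset.sum_insert (by simp [hcd]), Finset.sum_singleton, ← add_assoc, ← add_assoc]
    exact this
  · intro hsum
    refine ⟨hM, hcard, fun T hT hT3 => ⟨hT.trans hM, hT3, ?_⟩⟩
    have hd1 : (M \ T).card = 1 := by rw [Finset.card_sdiff_of_subset hT, hcard, hT3]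
    obtain ⟨x, hx⟩ := Finset.card_eq_one.mp hd1
    have hxM : x ∈ M := (Finset.mem_sdiff.mp (hx ▸ Finset.mem_singleton_self x)).1
    have hxe : IsEvenChar x := mem_evenChars (hM hxM)
    have h2 := Finset.sum_sdiff (f := fun m : Char2 => m) hT
    rw [hx, Finset.sum_singleton, hsum] at h2
    have : ∑ m ∈ T, m = x := by
      have := congrArg (x + ·) h2
      simpa [← add_assoc, self_add] using this
    rwa [this]
end

section
/- Let M₁, M₂ ∈ C₄⁻ with |M₁ ∩ M₂| = 2. Then the symmetric difference M₁ △ M₂ lies in C₄⁻. (Equivalently: if {m₁, m₂, h, k} ∈ C₄⁻ and {m₃, m₄, h, k} ∈ C₄⁻, with m₁, m₂, m₃, m₄, h, k all distinct, then {m₁, m₂, m₃, m₄} ∈ C₄⁻.) -/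
open scoped Classical

instance decEvenChar : DecidablePred IsEvenChar :=
  fun m => inferInstanceAs (Decidable (m.1.1 * m.2.1 + m.1.2 * m.2.2 = 0))

instance decOddChar : DecidablePred IsOddChar :=
  fun m => inferInstanceAs (Decidable (¬ IsEvenChar m))

/-- Computable candidate `C₄⁻` sets: even characteristics `x` with `x + s` odd. -/
def Fs (s : Char2) : Finset Char2 :=
  Finset.univ.filter (fun x => IsEvenChar x ∧ IsOddChar (x + s))

lemma mem_Fs {s x : Char2} : x ∈ Fs s ↔ IsEvenChar x ∧ IsOddChar (x + s) := by
  simp [Fs]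

lemma mem_EvenChars {x : Char2} : x ∈ EvenChars ↔ IsEvenChar x := by
  simp [EvenChars]

lemma Fs_card_le : ∀ s : Char2, (Fs s).card ≤ 4 := by decide

lemma char2_self_add : ∀ x : Char2, x + x = 0 := by decide

set_option maxRecDepth 10000 in
lemma Fs_sdiff : ∀ s₁ s₂ : Char2, ((Fs s₁) ∩ (Fs s₂)).card = 2 →
    ((Fs s₁) ∪ (Fs s₂)) \ ((Fs s₁) ∩ (Fs s₂)) = Fs (s₁ + s₂) ∧ (Fs (s₁ + s₂)).card = 4 := by
  decide

set_option maxRecDepth 10000 in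
lemma Fs_triples : ∀ s : Char2, ∀ x ∈ Fs s, ∀ y ∈ Fs s, ∀ z ∈ Fs s,
    x ≠ y → x ≠ z → y ≠ z → IsOddChar (x + y + z) := by decide

lemma C4minus_eq_Fs {M : Finset Char2} (h : C4minus M) : M = Fs (∑ m ∈ M, m) := by
  obtain ⟨hE, hcard, htr⟩ := h
  apply Finset.eq_of_subset_of_card_le _ (by rw [hcard]; exact Fs_card_le _)
  intro x hx
  refine mem_Fs.mpr ⟨mem_EvenChars.mp (hE hx), ?_⟩
  have hsum : x + ∑ m ∈ M, m = ∑ m ∈ M.erase x, m := by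
    rw [← Finset.add_sum_erase _ _ hx, ← add_assoc, char2_self_add, zero_add]
  rw [hsum]
  exact (htr (M.erase x) (Finset.erase_subset _ _)
    (by rw [Finset.card_erase_of_mem hx, hcard])).2.2

theorem symmDiff_C4minus_of_inter_two (M₁ M₂ : Finset Char2)
    (h₁ : C4minus M₁) (h₂ : C4minus M₂) (hinter : (M₁ ∩ M₂).card = 2) :
    C4minus ((M₁ ∪ M₂) \ (M₁ ∩ M₂)) := by
  have e₁ := C4minus_eq_Fs h₁
  have e₂ := C4minus_eq_Fs h₂
  rw [e₁, e₂] at hinter ⊢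
  obtain ⟨hS, hc4⟩ := Fs_sdiff _ _ hinter
  rw [hS]
  refine ⟨fun x hx => mem_EvenChars.mpr (mem_Fs.mp hx).1, hc4, fun T hT hT3 => ?_⟩
  obtain ⟨x, y, z, hxy, hxz, hyz, rfl⟩ := Finset.card_eq_three.mp hT3
  have hx : x ∈ Fs _ := hT (by simp)
  have hy : y ∈ Fs _ := hT (by simp)
  have hz : z ∈ Fs _ := hT (by simp)
  refine ⟨fun w hw => mem_EvenChars.mpr (mem_Fs.mp (hT hw)).1, hT3, ?_⟩
  have hsum : ∑ m ∈ ({x, y, z} : Finset Char2), m = x + y + z := by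
    rw [Finset.sum_insert (by simp [hxy, hxz]), Finset.sum_insert (by simp [hyz]),
      Finset.sum_singleton, add_assoc]
  rw [hsum]
  exact Fs_triples _ x hx y hy z hz hxy hxz hyz
end
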